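/- Let α, β > 0 and (v, θ, ω) ∈ ℝ³ with H₂(v,θ,ω) = 0 and H₁(v,θ,ω) ≠ 0. Then ω ≠ 0 and v ≠ 0, and with t₁ = |v|/β, t₂ = |ω|/α and s₃, s₄ ∈ {−1,1} satisfying s₃·v = −|v| and s₄·ω = −|ω|, the two-phase final state equations hold: v + s₃βt₁ = 0, ω + s₄αt₂ = 0, and θ + ωt₁ + ωt₂ + s₄αt₂²/2 = 0. -/

import Mathlib

noncomputable def H1 (α v θ ω : ℝ) : ℝ := 2 * α * θ + ω * |ω|

noncomputable def H2 (α β v θ ω : ℝ) : ℝ := ω * |ω| / (2 * α) + θ + ω * |v| / β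

/-! For `x ≠ 0` the sign condition `s * x = -|x|` pins down `s = -sign x`, hence `s * |x| = -x`. On the surface `H₂ = 0`, `H₁ = -2αω|v|/β`, so `H₁ ≠ 0` forces `ω ≠ 0` and `v ≠ 0`;
the final heading of the two-phase control is then exactly `H₂`. -/

lemma mul_abs_eq_neg_of_mul_eq_neg_abs {s x : ℝ} (hx : x ≠ 0) (h : s * x = -|x|) :
    s * |x| = -x := by
  apply mul_left_cancel₀ hx
  linear_combination |x| * h - sq_abs x

lemma add_mul_abs_eq_zero_of_mul_eq_neg_abs {s x : ℝ} (hx : x ≠ 0) (h : s * x = -|x|) :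
    x + s * |x| = 0 := by
  linear_combination mul_abs_eq_neg_of_mul_eq_neg_abs hx h

lemma H1_eq_of_H2_eq_zero {α β v θ ω : ℝ} (hα : α ≠ 0) (hH2 : H2 α β v θ ω = 0) :
    H1 α v θ ω = -(2 * α * ω * |v| / β) := by
  unfold H1
  unfold H2 at hH2
  field_simp at hH2 ⊢
  linear_combination hH2

lemma ne_zero_of_H2_eq_zero_of_H1_ne_zero {α β v θ ω : ℝ} (hα : α ≠ 0)
    (hH2 : H2 α β v θ ω = 0) (hH1 : H1 α v θ ω ≠ 0) : ω ≠ 0 ∧ v ≠ 0 := by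
  rw [H1_eq_of_H2_eq_zero hα hH2, neg_ne_zero, div_ne_zero_iff, mul_ne_zero_iff,
    mul_ne_zero_iff, abs_ne_zero] at hH1
  exact ⟨hH1.1.1.2, hH1.1.2⟩

theorem stmt9_general (α β v θ ω : ℝ) (hα : 0 < α) (hβ : 0 < β)
    (hH2 : H2 α β v θ ω = 0) (hH1 : H1 α v θ ω ≠ 0)
    (t₁ t₂ : ℝ) (ht₁ : t₁ = |v| / β) (ht₂ : t₂ = |ω| / α)
    (s₃ s₄ : ℝ)
    (hs₃v : s₃ * v = -|v|) (hs₄ω : s₄ * ω = -|ω|) :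
    ω ≠ 0 ∧ v ≠ 0 ∧
    v + s₃ * β * t₁ = 0 ∧
    ω + s₄ * α * t₂ = 0 ∧
    θ + ω * t₁ + ω * t₂ + s₄ * α * t₂ ^ 2 / 2 = 0 := by
  obtain ⟨hω, hv⟩ := ne_zero_of_H2_eq_zero_of_H1_ne_zero hα.ne' hH2 hH1
  have hs₄ := mul_abs_eq_neg_of_mul_eq_neg_abs hω hs₄ω
  subst ht₁ ht₂
  refine ⟨hω, hv, ?_, ?_, ?_⟩
  · rw [mul_assoc, mul_div_cancel₀ _ hβ.ne']
    exact add_mul_abs_eq_zero_of_mul_eq_neg_abs hv hs₃v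
  · rw [mul_assoc, mul_div_cancel₀ _ hα.ne']
    exact add_mul_abs_eq_zero_of_mul_eq_neg_abs hω hs₄ω
  · unfold H2 at hH2
    linear_combination (norm := (field_simp; ring)) hH2 + |ω| / (2 * α) * hs₄

theorem stmt9 (α β v θ ω : ℝ) (hα : 0 < α) (hβ : 0 < β)
    (hH2 : H2 α β v θ ω = 0) (hH1 : H1 α v θ ω ≠ 0)
    (t₁ t₂ : ℝ) (ht₁ : t₁ = |v| / β) (ht₂ : t₂ = |ω| / α)
    (s₃ s₄ : ℝ) (hs₃ : s₃ = -1 ∨ s₃ = 1) (hs₄ : s₄ = -1 ∨ s₄ = 1)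
    (hs₃v : s₃ * v = -|v|) (hs₄ω : s₄ * ω = -|ω|) :
    ω ≠ 0 ∧ v ≠ 0 ∧
    v + s₃ * β * t₁ = 0 ∧
    ω + s₄ * α * t₂ = 0 ∧
    θ + ω * t₁ + ω * t₂ + s₄ * α * t₂ ^ 2 / 2 = 0 :=
  stmt9_general α β v θ ω hα hβ hH2 hH1 t₁ t₂ ht₁ ht₂ s₃ s₄ hs₃v hs₄ω
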